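/- arXiv:1812.09231 — 4 statements merged into one kernel-verified Lean document; each statement's English description precedes it below -/
import Mathlib

section
/- Let (q_k)_{k≥1} be a sequence of real numbers in [0,1], and let m ∈ (0,1), C ≥ 1 with Cm < 1, and o ≥ 0 an integer. Suppose q₁ = m, and for every k ≥ 1, q_{k+1} ≤ q_k + C·m·(1 − q_{k−o}) where we interpret q_j := 0 for j ≤ 0, and suppose additionally q_{k+1} ≤ q_k + m for all k ≥ 1. Then for every k ≥ 1, q_k ≤ (1 − Cm)^{k−1}·m + (1 + o·m)·(1 − (1 − Cm)^{k−1}). -/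
/- In every step the sequence is pushed below the affine contraction
`x ↦ (1 - C m) x + C m (1 + o m)`, whose fixed point is `1 + o m`. For `k > o` this comes from the
recursion together with `q (k - o) ≥ q k - o m`; for `k ≤ o` the increment bound gives
`q k ≤ k m ≤ o m`, and then `q k + m` is already below the contraction. Iterating a contraction
from `q 1 = m` gives the bound. -/

theorem le_add_mul_of_succ_le_add {f : ℕ → ℝ} {c : ℝ} {j : ℕ}
    (h : ∀ k, j ≤ k → f (k + 1) ≤ f k + c) (i : ℕ) : f (j + i) ≤ f j + i * c := by
  induction i with
  | zero => simp
  | succ i ih =>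
    calc f (j + (i + 1)) = f (j + i + 1) := rfl
      _ ≤ f (j + i) + c := h (j + i) (Nat.le_add_right j i)
      _ ≤ f j + (i + 1 : ℕ) * c := by push_cast; linarith

theorem le_pow_mul_add_of_succ_le_affine {x : ℕ → ℝ} {a L : ℝ} (ha : 0 ≤ a)
    (h : ∀ n, x (n + 1) ≤ a * x n + (1 - a) * L) (n : ℕ) :
    x n ≤ a ^ n * x 0 + L * (1 - a ^ n) := by
  induction n with
  | zero => simp
  | succ n ih =>
    calc x (n + 1) ≤ a * x n + (1 - a) * L := h n
      _ ≤ a * (a ^ n * x 0 + L * (1 - a ^ n)) + (1 - a) * L := by gcongr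
      _ = a ^ (n + 1) * x 0 + L * (1 - a ^ (n + 1)) := by ring

theorem succ_le_affine_of_recursion {q : ℕ → ℝ} {m C : ℝ} {o : ℕ}
    (hm : 0 ≤ m) (hC : 1 ≤ C) (hq1 : q 1 = m)
    (hrec : ∀ k, 1 ≤ k →
      q (k + 1) ≤ q k + C * m * (1 - (if o < k then q (k - o) else 0)))
    (hstep : ∀ k, 1 ≤ k → q (k + 1) ≤ q k + m) {k : ℕ} (hk : 1 ≤ k) :
    q (k + 1) ≤ (1 - C * m) * q k + C * m * (1 + o * m) := by
  have hCm : 0 ≤ C * m := mul_nonneg (by linarith) hm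
  by_cases hok : o < k
  · have hback : q k ≤ q (k - o) + o * m := by
      have := le_add_mul_of_succ_le_add (fun i hi => hstep i (by omega)) o (j := k - o)
      rwa [Nat.sub_add_cancel hok.le] at this
    calc q (k + 1) ≤ q k + C * m * (1 - q (k - o)) := by simpa [if_pos hok] using hrec k hk
      _ ≤ q k + C * m * (1 - q k + o * m) := by gcongr; linarith
      _ = (1 - C * m) * q k + C * m * (1 + o * m) := by ring
  · have hk_le : q k ≤ o * m := by
      have := le_add_mul_of_succ_le_add hstep (k - 1) (j := 1)
      rw [Nat.add_sub_cancel' hk, hq1, Nat.cast_sub hk, Nat.cast_one] at this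
      have hko : (k : ℝ) ≤ o := by exact_mod_cast not_lt.mp hok
      linarith [mul_le_mul_of_nonneg_right hko hm]
    have hm_le : m ≤ C * m * (1 + o * m - q k) :=
      (le_mul_of_one_le_left hm hC).trans (le_mul_of_one_le_right hCm (by linarith))
    calc q (k + 1) ≤ q k + m := hstep k hk
      _ ≤ q k + C * m * (1 + o * m - q k) := by linarith
      _ = (1 - C * m) * q k + C * m * (1 + o * m) := by ring

theorem recursive_entry_estimate_general (q : ℕ → ℝ) (m C : ℝ) (o : ℕ)
    (hm : m ∈ Set.Ioo (0 : ℝ) 1) (hC : 1 ≤ C) (hCm : C * m < 1)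
    (hq1 : q 1 = m)
    (hrec : ∀ k, 1 ≤ k →
      q (k + 1) ≤ q k + C * m * (1 - (if o < k then q (k - o) else 0)))
    (hstep : ∀ k, 1 ≤ k → q (k + 1) ≤ q k + m) :
    ∀ k, 1 ≤ k →
      q k ≤ (1 - C * m) ^ (k - 1) * m +
        (1 + (o : ℝ) * m) * (1 - (1 - C * m) ^ (k - 1)) := by
  intro k hk
  have hcontract : ∀ n, q (n + 1 + 1) ≤
      (1 - C * m) * q (n + 1) + (1 - (1 - C * m)) * (1 + o * m) := fun n => by
    rw [sub_sub_cancel]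
    exact succ_le_affine_of_recursion hm.1.le hC hq1 hrec hstep (Nat.le_add_left 1 n)
  have := le_pow_mul_add_of_succ_le_affine (x := fun n => q (n + 1)) (by linarith) hcontract
    (k - 1)
  simpa only [Nat.sub_add_cancel hk, zero_add, hq1] using this

theorem recursive_entry_estimate (q : ℕ → ℝ) (m C : ℝ) (o : ℕ)
    (hq01 : ∀ k, q k ∈ Set.Icc (0 : ℝ) 1)
    (hm : m ∈ Set.Ioo (0 : ℝ) 1) (hC : 1 ≤ C) (hCm : C * m < 1)
    (hq1 : q 1 = m)
    (hrec : ∀ k, 1 ≤ k →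
      q (k + 1) ≤ q k + C * m * (1 - (if o < k then q (k - o) else 0)))
    (hstep : ∀ k, 1 ≤ k → q (k + 1) ≤ q k + m) :
    ∀ k, 1 ≤ k →
      q k ≤ (1 - C * m) ^ (k - 1) * m +
        (1 + (o : ℝ) * m) * (1 - (1 - C * m) ^ (k - 1)) :=
  recursive_entry_estimate_general q m C o hm hC hCm hq1 hrec hstep
end

section
/- Let (X, μ, T) be an ergodic probability measure-preserving system with μ atomless, X̂ ⊆ X measurable with μ(X̂) > 0, y ∈ Int(X̂), and suppose limsup_{r→0} τ̂_{B(y,r)}(x) · μ̂(B(y,r)) = +∞ for μ̂-a.e. x ∈ X̂, where τ̂ and μ̂ are the entry time and invariant measure of the first return system on X̂. Then limsup_{r→0} τ_{B(y,r)}(x) · μ(B(y,r)) = +∞ for μ-a.e. x ∈ X. -/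
open MeasureTheory Metric Filter Set
open scoped ENNReal Topology

/-- First entry time into `U` under `T` (valued in `ℝ≥0∞`, `⊤` if the orbit never enters `U`). -/
noncomputable def entryTime {X : Type*} (T : X → X) (U : Set X) (x : X) : ℝ≥0∞ :=
  sInf ((fun n : ℕ => (n : ℝ≥0∞)) '' {n : ℕ | 1 ≤ n ∧ T^[n] x ∈ U})

/-- First return time of `x` to `S` under `T` (`0` if the orbit never returns). -/
noncomputable def retTime {X : Type*} (T : X → X) (S : Set X) (x : X) : ℕ :=
  sInf {n : ℕ | 1 ≤ n ∧ T^[n] x ∈ S}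

/-- The first return map of `T` to `S`. -/
noncomputable def retMap {X : Type*} (T : X → X) (S : Set X) (x : X) : X :=
  T^[retTime T S x] x

/-!
The first return map to `X̂` enters a ball `B(y, r) ⊆ X̂` no later than `T` does, and
`μ̂ = μ / μ(X̂)` on such balls, so the limsup for `T` is infinite at almost every point of `X̂`.
If the orbit of `x` avoids `y`, then for small `r` the first `n` points of the orbit lie outside
`B(y, r)`, so the entry time of `x` is at least that of `T^n x`: the property pulls back along
orbits. By ergodicity almost every orbit meets the good part of `X̂`, and since `μ` has no atoms
almost every orbit avoids `y`.
-/

section EntryTime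

variable {X : Type*} {T : X → X}

lemma entryTime_le_of_iterate_mem {U : Set X} {x : X} {n : ℕ} (hn : 1 ≤ n) (hx : T^[n] x ∈ U) :
    entryTime T U x ≤ n :=
  sInf_le ⟨n, ⟨hn, hx⟩, rfl⟩

lemma le_entryTime {U : Set X} {x : X} {c : ℝ≥0∞}
    (h : ∀ n : ℕ, 1 ≤ n → T^[n] x ∈ U → c ≤ n) : c ≤ entryTime T U x :=
  le_sInf <| by rintro _ ⟨n, ⟨hn, hx⟩, rfl⟩; exact h n hn hx

lemma exists_iterate_retMap_eq_iterate {S : Set X} {n : ℕ} {x : X} (hn : 1 ≤ n)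
    (hnx : T^[n] x ∈ S) : ∃ k, 1 ≤ k ∧ k ≤ n ∧ (retMap T S)^[k] x = T^[n] x := by
  induction n using Nat.strong_induction_on generalizing x with
  | _ n ih =>
    obtain ⟨hm1, hmS⟩ : 1 ≤ retTime T S x ∧ T^[retTime T S x] x ∈ S :=
      Nat.sInf_mem (s := {m | 1 ≤ m ∧ T^[m] x ∈ S}) ⟨n, hn, hnx⟩
    set m := retTime T S x
    have hmn : m ≤ n := Nat.sInf_le ⟨hn, hnx⟩
    have hret : retMap T S x = T^[m] x := rfl
    obtain rfl | hlt := hmn.eq_or_lt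
    · exact ⟨1, le_rfl, hn, hret⟩
    have hsplit : T^[n] x = T^[n - m] (T^[m] x) := by
      rw [← Function.iterate_add_apply, Nat.sub_add_cancel hmn]
    obtain ⟨k, hk1, hkn, hk⟩ := ih (n - m) (by omega) (by omega) (hsplit ▸ hnx)
    exact ⟨k + 1, by omega, by omega, by rw [Function.iterate_succ_apply, hret, hk, hsplit]⟩

lemma entryTime_retMap_le {S U : Set X} (hU : U ⊆ S) (x : X) :
    entryTime (retMap T S) U x ≤ entryTime T U x := by
  refine le_entryTime fun n hn hnx => ?_
  obtain ⟨k, hk1, hkn, hk⟩ := exists_iterate_retMap_eq_iterate hn (hU hnx)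
  exact (entryTime_le_of_iterate_mem hk1 (hk ▸ hnx)).trans (by exact_mod_cast hkn)

lemma entryTime_iterate_le {U : Set X} {x : X} {n : ℕ}
    (h : ∀ k ∈ Finset.Icc 1 n, T^[k] x ∉ U) :
    entryTime T U (T^[n] x) ≤ entryTime T U x := by
  refine le_entryTime fun m hm hmx => ?_
  have hnm : n < m := by
    by_contra! hmn
    exact h m (Finset.mem_Icc.2 ⟨hm, hmn⟩) hmx
  have hsplit : T^[m] x = T^[m - n] (T^[n] x) := by
    rw [← Function.iterate_add_apply, Nat.sub_add_cancel hnm.le]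
  exact (entryTime_le_of_iterate_mem (by omega) (hsplit ▸ hmx)).trans
    (by exact_mod_cast Nat.sub_le m n)

end EntryTime

section Balls

variable {X : Type*} {T : X → X} {x y : X}

section PseudoMetric

variable [PseudoMetricSpace X]

lemma limsup_entryTime_ball_mul_eq_top_of_retMap [MeasurableSpace X] {μ : Measure X} {S : Set X}
    (hSm : MeasurableSet S) (hS : S ∈ 𝓝 y) {c : ℝ≥0∞} (hc : c ≠ ⊤)
    (htop : limsup (fun r => entryTime (retMap T S) (ball y r) x * (c • μ.restrict S) (ball y r))
      (𝓝[>] 0) = ⊤) :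
    limsup (fun r => entryTime T (ball y r) x * μ (ball y r)) (𝓝[>] 0) = ⊤ := by
  obtain ⟨r₀, hr₀, hball⟩ := Metric.mem_nhds_iff.1 hS
  have hle : ∀ᶠ r in 𝓝[>] (0 : ℝ),
      entryTime (retMap T S) (ball y r) x * (c • μ.restrict S) (ball y r)
        ≤ c * (entryTime T (ball y r) x * μ (ball y r)) := by
    filter_upwards [Ioo_mem_nhdsGT hr₀] with r hr
    have hsub : ball y r ⊆ S := (ball_subset_ball hr.2.le).trans hball
    rw [Measure.smul_apply, smul_eq_mul, Measure.restrict_apply' hSm,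
      inter_eq_self_of_subset_left hsub, mul_left_comm]
    exact mul_le_mul_right (mul_le_mul_left (entryTime_retMap_le hsub x) _) _
  have hprod := eq_top_iff.2 <| (eq_top_iff.1 htop).trans (limsup_le_limsup hle)
  rw [ENNReal.limsup_const_mul_of_ne_top hc, ENNReal.mul_eq_top] at hprod
  exact hprod.elim (·.2) (absurd ·.1 hc)

end PseudoMetric

variable [MetricSpace X]

lemma eventually_entryTime_ball_iterate_le {n : ℕ} (h : ∀ k ∈ Finset.Icc 1 n, T^[k] x ≠ y) :
    ∀ᶠ r in 𝓝[>] (0 : ℝ), entryTime T (ball y r) (T^[n] x) ≤ entryTime T (ball y r) x := by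
  have hfar : ∀ k ∈ Finset.Icc 1 n, ∀ᶠ r in 𝓝[>] (0 : ℝ), T^[k] x ∉ ball y r := fun k hk =>
    eventually_nhdsWithin_of_eventually_nhds <|
      (gt_mem_nhds (dist_pos.2 (h k hk))).mono fun r hr hmem => (mem_ball.1 hmem).not_gt hr
  filter_upwards [(Finset.eventually_all _).2 hfar] with r hr using entryTime_iterate_le hr

lemma limsup_entryTime_ball_mul_eq_top_of_iterate {w : ℝ → ℝ≥0∞} {n : ℕ}
    (h : ∀ k ∈ Finset.Icc 1 n, T^[k] x ≠ y)
    (htop : limsup (fun r => entryTime T (ball y r) (T^[n] x) * w r) (𝓝[>] 0) = ⊤) :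
    limsup (fun r => entryTime T (ball y r) x * w r) (𝓝[>] 0) = ⊤ :=
  eq_top_iff.2 <| (eq_top_iff.1 htop).trans <| limsup_le_limsup <|
    (eventually_entryTime_ball_iterate_le h).mono fun _ hr => mul_le_mul_left hr _

end Balls

section Ergodic

variable {X : Type*} [MeasurableSpace X] {μ : Measure X} [IsFiniteMeasure μ] {T : X → X}

lemma Ergodic.ae_exists_iterate_mem (hT : Ergodic T μ) {s : Set X} (hs : MeasurableSet s)
    (h0 : μ s ≠ 0) : ∀ᵐ x ∂μ, ∃ n, T^[n] x ∈ s := by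
  set A := ⋃ n, T^[n] ⁻¹' s
  have hA : MeasurableSet A := .iUnion fun n => hT.measurable.iterate n hs
  have hpre : T ⁻¹' A ⊆ A := by
    simp only [A, preimage_iUnion, ← preimage_comp, ← Function.iterate_succ]
    exact iUnion_subset fun n => subset_iUnion (fun n => T^[n] ⁻¹' s) (n + 1)
  obtain hempty | huniv := hT.ae_empty_or_univ_of_preimage_ae_le hA.nullMeasurableSet
    hpre.eventuallyLE
  · have hsA : s ⊆ A := subset_iUnion (fun n => T^[n] ⁻¹' s) 0
    exact absurd (measure_mono_null hsA (by simpa using measure_congr hempty)) h0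
  · filter_upwards [measure_eq_zero_iff_ae_notMem.1 (ae_eq_univ.1 huniv)] with x hx
    simpa [A] using hx

lemma Ergodic.ae_exists_iterate_of_ae_restrict (hT : Ergodic T μ) {S : Set X}
    (hS : MeasurableSet S) (h0 : μ S ≠ 0) {p : X → Prop} (hp : ∀ᵐ x ∂μ.restrict S, p x) :
    ∀ᵐ x ∂μ, ∃ n, p (T^[n] x) := by
  obtain ⟨s, hs, hsm, hps⟩ := hp.exists_measurable_mem
  have hSs : μ (S ∩ s) ≠ 0 := by
    rwa [inter_comm, ← Measure.restrict_apply hsm, measure_congr (ae_eq_univ.2 hs),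
      Measure.restrict_apply_univ]
  filter_upwards [hT.ae_exists_iterate_mem (hS.inter hsm) hSs] with x ⟨n, hn⟩
  exact ⟨n, hps _ hn.2⟩

end Ergodic

lemma MeasureTheory.MeasurePreserving.ae_forall_iterate_ne {X : Type*} [MeasurableSpace X]
    {μ : Measure X} {T : X → X} (hT : MeasurePreserving T μ μ) {y : X} (hy : μ {y} = 0) :
    ∀ᵐ x ∂μ, ∀ k, T^[k] x ≠ y :=
  ae_all_iff.2 fun k => measure_eq_zero_iff_ae_notMem.1 ((hT.iterate k).preimage_null hy)

theorem limsup_entry_top_of_induced_general {X : Type*} [MetricSpace X]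
    [MeasurableSpace X]
    (μ : Measure X) [IsProbabilityMeasure μ] (T : X → X)
    (hT : MeasurePreserving T μ μ) (hE : Ergodic T μ)
    (hatomless : ∀ z : X, μ {z} = 0)
    (Xhat : Set X) (hXm : MeasurableSet Xhat) (hpos : 0 < μ Xhat)
    (y : X) (hy : y ∈ interior Xhat)
    (hhat : ∀ᵐ x ∂((μ Xhat)⁻¹ • μ.restrict Xhat),
      Filter.limsup
          (fun r : ℝ => entryTime (retMap T Xhat) (ball y r) x *
            ((μ Xhat)⁻¹ • μ.restrict Xhat) (ball y r)) (𝓝[>] 0) = ⊤) :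
    ∀ᵐ x ∂μ,
      Filter.limsup (fun r : ℝ => entryTime T (ball y r) x * μ (ball y r)) (𝓝[>] 0) = ⊤ := by
  have hgood : ∀ᵐ x ∂μ.restrict Xhat,
      limsup (fun r : ℝ => entryTime T (ball y r) x * μ (ball y r)) (𝓝[>] 0) = ⊤ := by
    have hinv : (μ Xhat)⁻¹ ≠ 0 := ENNReal.inv_ne_zero.2 (measure_ne_top μ Xhat)
    filter_upwards [(Measure.ae_ennreal_smul_measure_iff hinv).1 hhat] with x hx
    exact limsup_entryTime_ball_mul_eq_top_of_retMap hXm (mem_interior_iff_mem_nhds.1 hy)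
      (ENNReal.inv_ne_top.2 hpos.ne') hx
  filter_upwards [hE.ae_exists_iterate_of_ae_restrict hXm hpos.ne' hgood,
    hT.ae_forall_iterate_ne (hatomless y)] with x ⟨n, hn⟩ hmiss
  exact limsup_entryTime_ball_mul_eq_top_of_iterate (fun k _ => hmiss k) hn

theorem limsup_entry_top_of_induced {X : Type*} [MetricSpace X]
    [MeasurableSpace X] [BorelSpace X]
    (μ : Measure X) [IsProbabilityMeasure μ] (T : X → X)
    (hT : MeasurePreserving T μ μ) (hE : Ergodic T μ)
    (hatomless : ∀ z : X, μ {z} = 0)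
    (Xhat : Set X) (hXm : MeasurableSet Xhat) (hpos : 0 < μ Xhat)
    (y : X) (hy : y ∈ interior Xhat)
    (hhat : ∀ᵐ x ∂((μ Xhat)⁻¹ • μ.restrict Xhat),
      Filter.limsup
          (fun r : ℝ => entryTime (retMap T Xhat) (ball y r) x *
            ((μ Xhat)⁻¹ • μ.restrict Xhat) (ball y r)) (𝓝[>] 0) = ⊤) :
    ∀ᵐ x ∂μ,
      Filter.limsup (fun r : ℝ => entryTime T (ball y r) x * μ (ball y r)) (𝓝[>] 0) = ⊤ :=
  limsup_entry_top_of_induced_general μ T hT hE hatomless Xhat hXm hpos y hy hhat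
end

section
/- Let (X, μ, T) be a probability measure-preserving system, R ⊆ X measurable, and suppose there is a constant C ≥ 1 and an integer o ≥ 0 such that μ(T^{−(k+1)}(R) ∩ ⋂_{i=0}^{k−o} T^{−i}(Rᶜ)) ≤ C·μ(R)·μ(⋂_{i=0}^{k−o} T^{−i}(Rᶜ)) for all k ≥ o. Define q_k := μ({x : ∃ 1 ≤ l ≤ k, T^l(x) ∈ R}). Then for all k ≥ o, q_{k+1} ≤ q_k + C·μ(R)·(1 − q_{k−o}). -/
open MeasureTheory Set
open scoped ENNReal

/-!
A point of `entrySet T R (k + 1)` outside `entrySet T R k` enters `R` exactly at time `k + 1`.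
Dropping the first `o` constraints, such an `x` has `T x` avoiding `R` at times `0, …, k - o - 1`
and lying in `R` at time `k`. By invariance of `μ` and quasi-independence (at index `k - 1`), the
new mass is at most `C μ(R)` times the mass of points avoiding `R` at times `1, …, k - o`, which is
`1 - μ (entrySet T R (k - o))`. When `k = o` the crude bound `μ(R) ≤ C μ(R)` suffices.
-/

section EntrySet

variable {X : Type*} (T : X → X) (R : Set X)

def entrySet (n : ℕ) : Set X := {x | ∃ l, 1 ≤ l ∧ l ≤ n ∧ T^[l] x ∈ R}

@[simp]
theorem entrySet_zero : entrySet T R 0 = ∅ := by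
  ext x
  simp only [entrySet, mem_ofPred_eq, mem_empty_iff_false, iff_false]
  omega

theorem entrySet_mono {m n : ℕ} (hmn : m ≤ n) : entrySet T R m ⊆ entrySet T R n :=
  fun _ ⟨l, h1, hl, hx⟩ => ⟨l, h1, hl.trans hmn, hx⟩

theorem entrySet_succ (n : ℕ) : entrySet T R (n + 1) = entrySet T R n ∪ T^[n + 1] ⁻¹' R := by
  ext x
  simp only [entrySet, mem_ofPred_eq, mem_union, mem_preimage]
  constructor
  · rintro ⟨l, h1, hl, hx⟩
    rcases Nat.lt_or_eq_of_le hl with hl | rfl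
    exacts [Or.inl ⟨l, h1, Nat.lt_succ_iff.mp hl, hx⟩, Or.inr hx]
  · rintro (⟨l, h1, hl, hx⟩ | hx)
    exacts [⟨l, h1, hl.trans n.le_succ, hx⟩, ⟨n + 1, n.succ_pos, le_rfl, hx⟩]

theorem entrySet_eq_biUnion (n : ℕ) : entrySet T R n = ⋃ l ∈ Icc 1 n, T^[l] ⁻¹' R := by
  ext x
  simp [entrySet, and_assoc]

theorem preimage_iInter_preimage_iterate_compl (j : ℕ) :
    T ⁻¹' (⋂ i ≤ j, T^[i] ⁻¹' Rᶜ) = (entrySet T R (j + 1))ᶜ := by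
  simp only [entrySet_eq_biUnion, compl_iUnion, preimage_iInter, ← preimage_comp,
    ← Function.iterate_succ, preimage_compl]
  ext x
  simp only [mem_iInter, mem_Icc]
  constructor
  · rintro h (_ | i) ⟨hi, hij⟩
    exacts [absurd hi (by omega), h i (by omega)]
  · exact fun h i hi => h (i + 1) ⟨by omega, by omega⟩

end EntrySet

section Measure

variable {X : Type*} [MeasurableSpace X] {μ : Measure X} {T : X → X} {R : Set X}

theorem measurableSet_entrySet (hT : Measurable T) (hR : MeasurableSet R) (n : ℕ) :
    MeasurableSet (entrySet T R n) := by
  rw [entrySet_eq_biUnion]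
  exact .biUnion (to_countable _) fun l _ => hR.preimage (hT.iterate l)

theorem measure_entrySet_succ_le (n : ℕ) :
    μ (entrySet T R (n + 1)) ≤ μ (entrySet T R n) + μ (T^[n + 1] ⁻¹' R \ entrySet T R n) := by
  rw [entrySet_succ, ← union_sdiff_self]
  exact measure_union_le _ _

theorem measure_iInter_preimage_iterate_compl [IsProbabilityMeasure μ]
    (hT : MeasurePreserving T μ μ) (hR : MeasurableSet R) (j : ℕ) :
    μ (⋂ i ≤ j, T^[i] ⁻¹' Rᶜ) = 1 - μ (entrySet T R (j + 1)) := by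
  have hmeas : MeasurableSet (⋂ i ≤ j, T^[i] ⁻¹' Rᶜ) :=
    .biInter (to_countable _) fun i _ => hR.compl.preimage (hT.measurable.iterate i)
  rw [← hT.measure_preimage hmeas.nullMeasurableSet, preimage_iInter_preimage_iterate_compl,
    prob_compl_eq_one_sub (measurableSet_entrySet hT.measurable hR _)]

theorem measure_preimage_iterate_succ_diff_entrySet (hT : MeasurePreserving T μ μ)
    (hR : MeasurableSet R) (n j : ℕ) :
    μ (T^[n + 1] ⁻¹' R \ entrySet T R (j + 1)) =
      μ (T^[n] ⁻¹' R ∩ ⋂ i ≤ j, T^[i] ⁻¹' Rᶜ) := by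
  have hmeas : MeasurableSet (T^[n] ⁻¹' R ∩ ⋂ i ≤ j, T^[i] ⁻¹' Rᶜ) :=
    (hR.preimage (hT.measurable.iterate n)).inter <|
      .biInter (to_countable _) fun i _ => hR.compl.preimage (hT.measurable.iterate i)
  rw [← hT.measure_preimage hmeas.nullMeasurableSet, preimage_inter,
    preimage_iInter_preimage_iterate_compl, ← preimage_comp, ← Function.iterate_succ,
    sdiff_eq]

end Measure

theorem entry_probability_recursion {X : Type*} [MeasurableSpace X]
    (μ : Measure X) [IsProbabilityMeasure μ] (T : X → X)
    (hT : MeasurePreserving T μ μ) (R : Set X) (hR : MeasurableSet R)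
    (C : ℝ) (hC : 1 ≤ C) (o : ℕ)
    (hqi : ∀ k : ℕ, o ≤ k →
      μ (T^[k + 1] ⁻¹' R ∩ ⋂ i ≤ k - o, T^[i] ⁻¹' Rᶜ) ≤
        ENNReal.ofReal C * μ R * μ (⋂ i ≤ k - o, T^[i] ⁻¹' Rᶜ)) :
    ∀ k : ℕ, o ≤ k →
      μ {x | ∃ l, 1 ≤ l ∧ l ≤ k + 1 ∧ T^[l] x ∈ R} ≤
        μ {x | ∃ l, 1 ≤ l ∧ l ≤ k ∧ T^[l] x ∈ R} +
          ENNReal.ofReal C * μ R *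
            (1 - μ {x | ∃ l, 1 ≤ l ∧ l ≤ k - o ∧ T^[l] x ∈ R}) := by
  intro k hk
  change μ (entrySet T R (k + 1)) ≤
    μ (entrySet T R k) + ENNReal.ofReal C * μ R * (1 - μ (entrySet T R (k - o)))
  refine (measure_entrySet_succ_le k).trans (add_le_add le_rfl ?_)
  refine (measure_mono (sdiff_subset_sdiff_right (entrySet_mono T R (k.sub_le o)))).trans ?_
  cases hko : k - o with
  | zero =>
    calc μ (T^[k + 1] ⁻¹' R \ entrySet T R 0)
        ≤ μ (T^[k + 1] ⁻¹' R) := measure_mono sdiff_subset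
      _ = 1 * μ R := by rw [(hT.iterate _).measure_preimage hR.nullMeasurableSet, one_mul]
      _ ≤ ENNReal.ofReal C * μ R * (1 - μ (entrySet T R 0)) := by
        rw [entrySet_zero, measure_empty, tsub_zero, mul_one]
        gcongr
        exact ENNReal.one_le_ofReal.mpr hC
  | succ j =>
    obtain ⟨n, rfl⟩ : ∃ n, k = n + 1 := ⟨k - 1, by omega⟩
    have hqi' := hqi n (by omega)
    rw [show n - o = j by omega] at hqi'
    rwa [measure_preimage_iterate_succ_diff_entrySet hT hR,
      ← measure_iInter_preimage_iterate_compl hT hR]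
end

section
/- Let μ be a Borel probability measure on a metric space and y a point with μ(B(y,r)) ≤ Cr^α for all r > 0 (C ≥ 1, α > 0). Suppose (r_k)_{k≥1} is a decreasing sequence of radii with r_k → 0, and (n_k) a sequence of positive integers with n_{k+1}/n_k → 1, such that exp(−χ n_{k⁺(r)}/2) ≤ K R^{−1} r and μ(B(y,r)) ≤ Q exp(−h n_{k⁻(r)}/2) for all small r, where k⁻(r), k⁺(r) are the largest/smallest indices straddling r as in the paper, χ, h > 0, K, R, Q > 0. Then there exist constants C' ≥ 1 and α' > 0 such that μ(B(y,r)) ≤ C'·r^{α'} for all r > 0 sufficiently small; one may take α' = h/(2χ). -/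
open MeasureTheory Metric Filter Set
open scoped ENNReal Topology

/-!
Since `n (k + 1) / n k → 1`, eventually `n (k + 1) ≤ 2 n k`, so the two indices straddling a
small radius `r` satisfy `n_{k⁺(r)} ≤ 2 n_{k⁻(r)}`. Hence
`μ (B(y, r)) ≤ Q exp(-h n_{k⁻}/2) ≤ Q exp(-h n_{k⁺}/4) = Q exp(-χ n_{k⁺}/2) ^ (h / (2χ))`,
and the scale condition `exp(-χ n_{k⁺}/2) ≤ K R⁻¹ r` turns this into
`Q (K / R) ^ (h / (2χ)) r ^ (h / (2χ))`.
-/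

lemma eventually_le_mul_of_tendsto_div_one {u : ℕ → ℝ} (hu : ∀ k, 0 ≤ u k)
    (hlim : Tendsto (fun k => u (k + 1) / u k) atTop (𝓝 1)) {c : ℝ} (hc : 1 < c) :
    ∀ᶠ k in atTop, u (k + 1) ≤ c * u k := by
  filter_upwards [hlim.eventually (Ioo_mem_nhds one_pos hc)] with k ⟨hpos, hlt⟩
  have huk : 0 < u k := (hu k).lt_of_ne fun h0 => by simp [← h0] at hpos
  exact ((div_lt_iff₀ huk).mp hlt).le

lemma exp_neg_mul_le_rpow_of_le_mul {χ h c x y s : ℝ} (hχ : 0 < χ) (hh : 0 ≤ h) (hc : 0 < c)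
    (hyx : y ≤ c * x) (hs : Real.exp (-χ * y) ≤ s) :
    Real.exp (-h * x) ≤ s ^ (h / (c * χ)) := by
  have hβ : 0 ≤ h / (c * χ) := by positivity
  calc Real.exp (-h * x) ≤ Real.exp (-χ * y * (h / (c * χ))) := by
        refine Real.exp_le_exp.mpr ?_
        have hβy : -χ * y * (h / (c * χ)) = -(h / c) * y := by field_simp
        rw [hβy]
        have hcx : h / c * (c * x) = h * x := by field_simp
        linarith [mul_le_mul_of_nonneg_left hyx (div_nonneg hh hc.le)]
    _ = Real.exp (-χ * y) ^ (h / (c * χ)) := Real.exp_mul _ _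
    _ ≤ s ^ (h / (c * χ)) := Real.rpow_le_rpow (Real.exp_pos _).le hs hβ

theorem frostman_interpolation_general {X : Type*} [MetricSpace X] [MeasurableSpace X]
    (μ : Measure X) (y : X)
    (n : ℕ → ℕ)
    (hn : Tendsto (fun k : ℕ => (n (k + 1) : ℝ) / n k) atTop (𝓝 1))
    (χ h K R Q : ℝ) (hχ : 0 < χ) (hh : 0 < h) (hK : 0 < K) (hR : 0 < R) (hQ : 0 < Q)
    (kminus kplus : ℝ → ℕ)
    (hkto : Tendsto kminus (𝓝[>] (0 : ℝ)) atTop)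
    (hsmall : ∀ᶠ r in 𝓝[>] (0 : ℝ),
      Real.exp (-χ * (n (kplus r) : ℝ) / 2) ≤ K * R⁻¹ * r ∧
      (μ (ball y r)).toReal ≤ Q * Real.exp (-h * (n (kminus r) : ℝ) / 2) ∧
      kminus r ≤ kplus r ∧ kplus r ≤ kminus r + 1) :
    ∃ C' : ℝ, 1 ≤ C' ∧
      ∀ᶠ r in 𝓝[>] (0 : ℝ), (μ (ball y r)).toReal ≤ C' * r ^ (h / (2 * χ)) := by
  set β := h / (2 * χ)
  obtain ⟨k₀, hk₀⟩ := eventually_atTop.mp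
    (eventually_le_mul_of_tendsto_div_one (fun k => Nat.cast_nonneg (n k)) hn one_lt_two)
  refine ⟨max 1 (Q * (K / R) ^ β), le_max_left _ _, ?_⟩
  filter_upwards [hsmall, hkto.eventually_ge_atTop k₀, self_mem_nhdsWithin]
    with r ⟨hscale, hμ, hk, hk'⟩ hk₀r (hr : 0 < r)
  have hstraddle : (n (kplus r) : ℝ) ≤ 2 * n (kminus r) := by
    rcases Nat.le_and_le_add_one_iff.mp ⟨hk, hk'⟩ with heq | heq <;> rw [heq]
    · linarith [Nat.cast_nonneg (α := ℝ) (n (kminus r))]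
    · exact hk₀ _ hk₀r
  rw [mul_div_assoc] at hscale hμ
  have hexp := exp_neg_mul_le_rpow_of_le_mul (x := (n (kminus r) : ℝ) / 2) hχ hh.le two_pos
    (by linarith) hscale
  calc (μ (ball y r)).toReal ≤ Q * (K * R⁻¹ * r) ^ β := hμ.trans (by gcongr)
    _ = Q * (K / R) ^ β * r ^ β := by
        rw [Real.mul_rpow (by positivity) hr.le, div_eq_mul_inv, mul_assoc]
    _ ≤ max 1 (Q * (K / R) ^ β) * r ^ β := by gcongr; exact le_max_right _ _

theorem frostman_interpolation {X : Type*} [MetricSpace X] [MeasurableSpace X]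
    (μ : Measure X) [IsProbabilityMeasure μ] (y : X)
    (C α : ℝ) (hC : 1 ≤ C) (hα : 0 < α)
    (hpow : ∀ r : ℝ, 0 < r → μ (ball y r) ≤ ENNReal.ofReal (C * r ^ α))
    (rk : ℕ → ℝ) (hrk : StrictAnti rk) (hrk0 : Tendsto rk atTop (𝓝 0))
    (n : ℕ → ℕ) (hnpos : ∀ k, 0 < n k)
    (hn : Tendsto (fun k : ℕ => (n (k + 1) : ℝ) / n k) atTop (𝓝 1))
    (χ h K R Q : ℝ) (hχ : 0 < χ) (hh : 0 < h) (hK : 0 < K) (hR : 0 < R) (hQ : 0 < Q)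
    (kminus kplus : ℝ → ℕ)
    (hkto : Tendsto kminus (𝓝[>] (0 : ℝ)) atTop)
    (hsmall : ∀ᶠ r in 𝓝[>] (0 : ℝ),
      Real.exp (-χ * (n (kplus r) : ℝ) / 2) ≤ K * R⁻¹ * r ∧
      (μ (ball y r)).toReal ≤ Q * Real.exp (-h * (n (kminus r) : ℝ) / 2) ∧
      kminus r ≤ kplus r ∧ kplus r ≤ kminus r + 1) :
    ∃ C' : ℝ, 1 ≤ C' ∧
      ∀ᶠ r in 𝓝[>] (0 : ℝ), (μ (ball y r)).toReal ≤ C' * r ^ (h / (2 * χ)) :=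
  frostman_interpolation_general μ y n hn χ h K R Q hχ hh hK hR hQ kminus kplus hkto hsmall
end
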